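/- Let $g_\ell(\lambda)=\inf_{k\in\mathbb{N}^*}k^{-d}\,\Gamma_\ell(\lambda,Q_k)$ where $Q_k=[-k/2,k/2)^d$ and $\Gamma_\ell(\lambda,B)=\sup\{\lambda\,\#S-\xi_\ell(S):S\subset B\text{ finite}\}$. Assume $\ell$ satisfies: $\ell$ l.s.c., $\ell(0)>0$, $\ell$ finite non-increasing on $[r_0,\infty)$ with $\lim_{r\to\infty}\ell(r)=0$, and $\int_{r_0}^\infty\ell(t)t^{d-1}dt<\infty$. Then for every $\lambda>0$ and every $t>0$ one has the lower bound $g_\ell(\lambda)\ge \lambda t - t\,\Lambda_\ell(t^{-1/d})$, i.e. $g_\ell\ge H_\ell^*$ where $H_\ell(t)=t\,\Lambda_\ell(t^{-1/d})$ for $t>0$ and $H_\ell(t)=+\infty$ for $t\le 0$. -/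

import Mathlib

open scoped ENNReal BigOperators Classical
open Filter MeasureTheory Set

noncomputable section

def xi {d : ℕ} (ℓ : ℝ → ℝ≥0∞) (S : Finset (EuclideanSpace ℝ (Fin d))) : ℝ≥0∞ :=
  ∑ x ∈ S, ∑ y ∈ S, if x ≠ y then ℓ (dist x y) else 0

def Gam {d : ℕ} (ℓ : ℝ → ℝ≥0∞) (lam : ℝ) (B : Set (EuclideanSpace ℝ (Fin d))) : ℝ :=
  sSup {x : ℝ | ∃ S : Finset (EuclideanSpace ℝ (Fin d)),
    ↑S ⊆ B ∧ xi ℓ S ≠ ⊤ ∧ x = lam * S.card - (xi ℓ S).toReal}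

def Qcube (d k : ℕ) : Set (EuclideanSpace ℝ (Fin d)) :=
  {x | ∀ i, -((k : ℝ)/2) ≤ x i ∧ x i < (k : ℝ)/2}

def gl (d : ℕ) (ℓ : ℝ → ℝ≥0∞) (lam : ℝ) : ℝ :=
  ⨅ k : ℕ+, Gam ℓ lam (Qcube d k) / (k : ℝ) ^ d

def LamZ (d : ℕ) (ℓ : ℝ → ℝ≥0∞) (r : ℝ) : ℝ≥0∞ :=
  ∑' z : {z : Fin d → ℤ // z ≠ 0},
    ℓ (r * ‖(WithLp.equiv 2 (Fin d → ℝ)).symm (fun i => (((z : Fin d → ℤ)) i : ℝ))‖)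

lemma abs_sub_lt_of_floor_div_eq {a b ε : ℝ} (hε : 0 < ε) (h : ⌊a/ε⌋ = ⌊b/ε⌋) :
    |a - b| < ε := by
  have h1 : a/ε - b/ε < 1 := by
    have := Int.lt_floor_add_one (a/ε)
    have := Int.floor_le (b/ε)
    rw [← h] at this; linarith
  have h2 : b/ε - a/ε < 1 := by
    have := Int.lt_floor_add_one (b/ε)
    have := Int.floor_le (a/ε)
    rw [h] at this; linarith
  have h3 : |a/ε - b/ε| < 1 := abs_sub_lt_iff.2 ⟨h1, h2⟩
  have h4 : a - b = (a/ε - b/ε) * ε := by field_simp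
  rw [h4, abs_mul, abs_of_pos hε]
  calc |a/ε - b/ε| * ε < 1 * ε := mul_lt_mul_of_pos_right h3 hε
    _ = ε := one_mul ε

lemma dist_le_of_coords {d : ℕ} (x y : EuclideanSpace ℝ (Fin d)) {ε : ℝ} (hε : 0 ≤ ε)
    (h : ∀ i, dist (x i) (y i) ≤ ε) : dist x y ≤ Real.sqrt d * ε := by
  rw [EuclideanSpace.dist_eq]
  have : ∑ i, dist (x i) (y i) ^ 2 ≤ (d : ℝ) * ε ^ 2 := by
    calc ∑ i, dist (x i) (y i) ^ 2 ≤ ∑ _i : Fin d, ε ^ 2 :=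
          Finset.sum_le_sum fun i _ => by
            have := h i; nlinarith [dist_nonneg (x := x i) (y := y i)]
      _ = (d : ℝ) * ε ^ 2 := by simp [Finset.sum_const, nsmul_eq_mul]
  calc Real.sqrt (∑ i, dist (x i) (y i) ^ 2) ≤ Real.sqrt ((d:ℝ) * ε ^2) := Real.sqrt_le_sqrt this
    _ = Real.sqrt d * ε := by
        rw [Real.sqrt_mul (by positivity), Real.sqrt_sq hε]


lemma zero_mem_GamSet {d : ℕ} (ℓ : ℝ → ℝ≥0∞) (lam : ℝ) (B : Set (EuclideanSpace ℝ (Fin d))) :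
    (0:ℝ) ∈ {x : ℝ | ∃ S : Finset (EuclideanSpace ℝ (Fin d)),
      ↑S ⊆ B ∧ xi ℓ S ≠ ⊤ ∧ x = lam * S.card - (xi ℓ S).toReal} := by
  refine ⟨∅, by simp, by simp [xi], by simp [xi]⟩

lemma Gam_nonneg {d : ℕ} (ℓ : ℝ → ℝ≥0∞) (lam : ℝ) (B : Set (EuclideanSpace ℝ (Fin d))) :
    0 ≤ Gam ℓ lam B := by
  by_cases h : BddAbove {x : ℝ | ∃ S : Finset (EuclideanSpace ℝ (Fin d)),
      ↑S ⊆ B ∧ xi ℓ S ≠ ⊤ ∧ x = lam * S.card - (xi ℓ S).toReal}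
  · exact le_csSup h (zero_mem_GamSet ℓ lam B)
  · unfold Gam; rw [Real.sSup_of_not_bddAbove h]

lemma gl_nonneg (d : ℕ) (ℓ : ℝ → ℝ≥0∞) (lam : ℝ) : 0 ≤ gl d ℓ lam :=
  Real.iInf_nonneg fun k => div_nonneg (Gam_nonneg ℓ lam _) (by positivity)

lemma lattice_exists {d : ℕ} (hd : 0 < d) (ℓ : ℝ → ℝ≥0∞) {s : ℝ} (hs : 0 < s)
    (k : ℕ) (hΛ : LamZ d ℓ s ≠ ⊤) :
    ∃ S : Finset (EuclideanSpace ℝ (Fin d)), ↑S ⊆ Qcube d k ∧ xi ℓ S ≠ ⊤ ∧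
      ∃ m : ℕ, (k:ℝ)/s ≤ m ∧ S.card = m ^ d ∧
        xi ℓ S ≤ (m ^ d : ℕ) * LamZ d ℓ s := by
  set m : ℕ := ⌈(k:ℝ)/s⌉₊ with hmdef
  have hks : (0:ℝ) ≤ (k:ℝ)/s := by positivity
  have hm1 : (k:ℝ)/s ≤ m := Nat.le_ceil _
  have hm2 : (m:ℝ) < (k:ℝ)/s + 1 := Nat.ceil_lt_add_one hks
  set p : (Fin d → ℕ) → EuclideanSpace ℝ (Fin d) :=
    fun z => (WithLp.equiv 2 (Fin d → ℝ)).symm (fun i => -(k:ℝ)/2 + s * z i) with hpdef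
  have hp_apply : ∀ z i, p z i = -(k:ℝ)/2 + s * z i := fun z i => rfl
  have hpinj : Function.Injective p := by
    intro z z' h
    funext i
    have := congrFun (congrArg (WithLp.equiv 2 (Fin d → ℝ)) h) i
    simp only [hpdef, Equiv.apply_symm_apply] at this
    have : s * (z i : ℝ) = s * z' i := by linarith
    have := mul_left_cancel₀ hs.ne' this
    exact_mod_cast this
  set G : Finset (Fin d → ℕ) := Fintype.piFinset fun _ => Finset.range m with hGdef
  set S : Finset (EuclideanSpace ℝ (Fin d)) := G.image p with hSdef
  have hcard : S.card = m ^ d := by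
    rw [hSdef, Finset.card_image_of_injective _ hpinj, hGdef,
      Fintype.card_piFinset_const, Finset.card_range]
  -- distance formula
  have hdist : ∀ z z' : Fin d → ℕ, dist (p z) (p z') =
      s * ‖(WithLp.equiv 2 (Fin d → ℝ)).symm
        (fun i => (((z' i : ℤ) - (z i : ℤ) : ℤ) : ℝ))‖ := by
    intro z z'
    rw [EuclideanSpace.dist_eq, EuclideanSpace.norm_eq]
    rw [← Real.sqrt_sq hs.le, ← Real.sqrt_mul (sq_nonneg s), Finset.mul_sum]
    congr 1
    apply Finset.sum_congr rfl
    intro i _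
    rw [hp_apply, hp_apply, Real.dist_eq]
    simp only [WithLp.equiv_symm_apply, PiLp.toLp_apply]
    rw [sq_abs]
    push_cast
    rw [Real.norm_eq_abs, sq_abs]
    ring
  -- energy bound
  have hinner : ∀ x ∈ S, (∑ y ∈ S, if x ≠ y then ℓ (dist x y) else 0) ≤ LamZ d ℓ s := by
    intro x hx
    obtain ⟨z, hzG, rfl⟩ := Finset.mem_image.1 (by rwa [hSdef] at hx)
    rw [hSdef, Finset.sum_image (fun a _ b _ h => hpinj h)]
    rw [← Finset.sum_filter]
    set Ffil := G.filter (fun z' => p z ≠ p z') with hFfil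
    have hne : ∀ z' ∈ Ffil, (fun i => ((z' i : ℤ) - (z i : ℤ))) ≠ (0 : Fin d → ℤ) := by
      intro z' hz' h0
      have hpne : p z ≠ p z' := (Finset.mem_filter.1 hz').2
      have hzz : z = z' := by
        funext i
        have := congrFun h0 i
        simp only [Pi.zero_apply, sub_eq_zero] at this
        exact_mod_cast this.symm
      exact hpne (by rw [hzz])
    calc ∑ z' ∈ Ffil, ℓ (dist (p z) (p z'))
        = ∑' (z' : {a // a ∈ Ffil}), ℓ (dist (p z) (p z'.1)) := (Finset.tsum_subtype _ _).symm
      _ ≤ LamZ d ℓ s := by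
          apply ENNReal.summable.tsum_le_tsum_of_inj
            (fun z' : {a // a ∈ Ffil} =>
              (⟨fun i => ((z'.1 i : ℤ) - (z i : ℤ)), hne z'.1 z'.2⟩ : {w : Fin d → ℤ // w ≠ 0}))
          · intro a b hab
            apply Subtype.ext
            funext i
            have := congrFun (congrArg Subtype.val hab) i
            simp only at this
            have : (a.1 i : ℤ) = b.1 i := by omega
            exact_mod_cast this
          · intro c _; exact zero_le
          · intro z'
            rw [hdist z z'.1]
          · exact ENNReal.summable
  have hxile : xi ℓ S ≤ (m ^ d : ℕ) * LamZ d ℓ s := by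
    calc xi ℓ S ≤ ∑ _x ∈ S, LamZ d ℓ s := Finset.sum_le_sum hinner
      _ = (m ^ d : ℕ) * LamZ d ℓ s := by rw [Finset.sum_const, hcard, nsmul_eq_mul]
  have hxitop : xi ℓ S ≠ ⊤ :=
    ne_top_of_le_ne_top (ENNReal.mul_ne_top (ENNReal.natCast_ne_top _) hΛ) hxile
  -- subset of the cube
  refine ⟨S, ?_, hxitop, m, hm1, hcard, hxile⟩
  · intro x hx
    rw [hSdef] at hx
    simp only [Finset.coe_image, Set.mem_image, Finset.mem_coe] at hx
    obtain ⟨z, hz, rfl⟩ := hx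
    intro i
    rw [hGdef, Fintype.mem_piFinset] at hz
    have hzi : (z i : ℝ) ≤ (m:ℝ) - 1 := by
      have := hz i; rw [Finset.mem_range] at this
      have : (z i : ℝ) + 1 ≤ m := by exact_mod_cast this
      linarith
    have hzi0 : (0:ℝ) ≤ z i := Nat.cast_nonneg _
    rw [hp_apply]
    constructor
    · have : 0 ≤ s * (z i : ℝ) := by positivity
      rw [neg_div]
      linarith
    · have h4 : s * (z i : ℝ) ≤ s * ((m:ℝ) - 1) := by
        apply mul_le_mul_of_nonneg_left hzi hs.le
      have h5 : s * ((m:ℝ) - 1) < k := by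
        have := mul_lt_mul_of_pos_left (show (m:ℝ) - 1 < (k:ℝ)/s by linarith) hs
        calc s * ((m:ℝ) - 1) < s * ((k:ℝ)/s) := this
          _ = k := by field_simp
      linarith

lemma Gam_bddAbove {d : ℕ} (hd : 0 < d) (ℓ : ℝ → ℝ≥0∞) (hlsc : LowerSemicontinuous ℓ)
    (h0 : 0 < ℓ 0) (lam : ℝ) (k : ℕ) :
    BddAbove {x : ℝ | ∃ S : Finset (EuclideanSpace ℝ (Fin d)),
      ↑S ⊆ Qcube d k ∧ xi ℓ S ≠ ⊤ ∧ x = lam * S.card - (xi ℓ S).toReal} := by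
  -- the constant c₀
  set c₀ : ℝ≥0∞ := min (ℓ 0) 1 / 2 with hc₀def
  have hmin0 : min (ℓ 0) 1 ≠ 0 := (lt_min h0 zero_lt_one).ne'
  have hmintop : min (ℓ 0) 1 ≠ ⊤ := ne_top_of_le_ne_top ENNReal.one_ne_top (min_le_right _ _)
  have hc₀0 : c₀ ≠ 0 := by
    simp only [hc₀def]
    exact (ENNReal.half_pos hmin0).ne'
  have hc₀top : c₀ ≠ ⊤ := by
    simp only [hc₀def]
    exact ne_top_of_le_ne_top hmintop ENNReal.half_le_self
  have hc₀lt : c₀ < ℓ 0 :=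
    lt_of_lt_of_le (ENNReal.half_lt_self hmin0 hmintop) (min_le_left _ _)
  -- δ from lower semicontinuity
  obtain ⟨δ, hδ0, hδ⟩ : ∃ δ > 0, ∀ r : ℝ, dist r 0 < δ → c₀ < ℓ r := by
    have := hlsc 0 c₀ hc₀lt
    rw [Metric.eventually_nhds_iff] at this
    obtain ⟨δ, hδ0, hδ⟩ := this
    exact ⟨δ, hδ0, fun r hr => hδ hr⟩
  set ε : ℝ := δ / (d + 1) with hεdef
  have hε : 0 < ε := by positivity
  -- key: same box implies energy at least c₀
  have hkey : ∀ x y : EuclideanSpace ℝ (Fin d), (∀ i, |x i - y i| ≤ ε) →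
      c₀ ≤ ℓ (dist x y) := by
    intro x y h
    refine (hδ _ ?_).le
    rw [Real.dist_eq, sub_zero, abs_of_nonneg dist_nonneg]
    calc dist x y ≤ Real.sqrt d * ε := dist_le_of_coords x y hε.le (fun i => h i)
      _ ≤ (d : ℝ) * ε := by
          apply mul_le_mul_of_nonneg_right _ hε.le
          have h1 : (1:ℝ) ≤ (d:ℝ) := by exact_mod_cast hd
          nlinarith [Real.sq_sqrt (show (0:ℝ) ≤ d by positivity), Real.sqrt_nonneg (d:ℝ),
            sq_nonneg (Real.sqrt d - 1)]
      _ < δ := by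
          have hdpos : (0:ℝ) < (d:ℝ) + 1 := by positivity
          rw [hεdef, mul_div_assoc', div_lt_iff₀ hdpos]
          nlinarith
  -- boxes
  set φ : EuclideanSpace ℝ (Fin d) → (Fin d → ℤ) := fun x i => ⌊x i / ε⌋ with hφdef
  set K : ℕ := ⌈(k:ℝ)/(2*ε)⌉₊ with hKdef
  set T : Finset (Fin d → ℤ) := Fintype.piFinset fun _ : Fin d => Finset.Icc (-(K:ℤ)) K with hTdef
  set M : ℕ := T.card with hMdef
  have hM1 : 1 ≤ M := Finset.card_pos.2 ⟨fun _ => 0, by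
    rw [hTdef, Fintype.mem_piFinset]; intro i; rw [Finset.mem_Icc]; omega⟩
  set c : ℝ := c₀.toReal with hcdef
  have hc : 0 < c := ENNReal.toReal_pos hc₀0 hc₀top
  refine ⟨(M:ℝ) * (lam + c)^2 / (4*c), ?_⟩
  rintro x ⟨S, hSB, hStop, rfl⟩
  set N : ℕ := S.card with hNdef
  set n : (Fin d → ℤ) → ℕ := fun b => (S.filter fun y => φ y = b).card with hndef
  have hmaps : ∀ x ∈ S, φ x ∈ T := by
    intro x hx
    have hxQ := hSB hx
    rw [hTdef, Fintype.mem_piFinset]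
    intro i
    have h1 := (hxQ i).1
    have h2 := (hxQ i).2
    have hK : (k:ℝ)/(2*ε) ≤ K := Nat.le_ceil _
    have ha : x i / ε ≤ (K:ℝ) := by
      calc x i / ε ≤ ((k:ℝ)/2) / ε := by gcongr
        _ = (k:ℝ)/(2*ε) := by ring
        _ ≤ K := hK
    have hb : -(K:ℝ) ≤ x i / ε := by
      calc -(K:ℝ) ≤ -((k:ℝ)/(2*ε)) := by linarith
        _ = (-((k:ℝ)/2)) / ε := by ring
        _ ≤ x i / ε := by gcongr
    rw [Finset.mem_Icc]
    constructor
    · exact Int.le_floor.2 (by exact_mod_cast hb)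
    · have h3 : ((⌊x i / ε⌋ : ℝ)) ≤ (K:ℝ) := (Int.floor_le _).trans ha
      exact_mod_cast h3
  -- energy lower bound per point
  have hinner : ∀ x ∈ S, ((n (φ x) - 1 : ℕ) : ℝ≥0∞) * c₀ ≤
      ∑ y ∈ S, if x ≠ y then ℓ (dist x y) else 0 := by
    intro x hx
    classical
    set F : Finset _ := (S.filter fun y => φ y = φ x).erase x with hFdef
    have hFsub : F ⊆ S := (Finset.erase_subset _ _).trans (Finset.filter_subset _ _)
    have hFcard : F.card = n (φ x) - 1 := by
      have hxmem : x ∈ S.filter (fun y => φ y = φ x) := Finset.mem_filter.2 ⟨hx, rfl⟩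
      rw [hFdef, Finset.card_erase_of_mem hxmem]
    calc ((n (φ x) - 1 : ℕ) : ℝ≥0∞) * c₀ = ∑ _y ∈ F, c₀ := by
          rw [Finset.sum_const, hFcard, nsmul_eq_mul]
      _ ≤ ∑ y ∈ F, (if x ≠ y then ℓ (dist x y) else 0) := by
          apply Finset.sum_le_sum
          intro y hy
          have hyx : y ≠ x := Finset.ne_of_mem_erase hy
          rw [if_pos (Ne.symm hyx)]
          apply hkey
          intro i
          have hφ : φ y = φ x := (Finset.mem_filter.1 (Finset.mem_of_mem_erase hy)).2
          have := abs_sub_lt_of_floor_div_eq hε (congrFun hφ.symm i)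
          exact this.le
      _ ≤ ∑ y ∈ S, (if x ≠ y then ℓ (dist x y) else 0) :=
          Finset.sum_le_sum_of_subset hFsub
  set P : ℕ := ∑ x ∈ S, (n (φ x) - 1) with hPdef
  have h1 : (P : ℝ≥0∞) * c₀ ≤ xi ℓ S := by
    rw [hPdef, Nat.cast_sum, Finset.sum_mul]
    exact Finset.sum_le_sum hinner
  have h1real : (P:ℝ) * c ≤ (xi ℓ S).toReal := by
    have := ENNReal.toReal_mono hStop h1
    rw [ENNReal.toReal_mul] at this
    simpa using this
  have hfib : ∀ x ∈ S, 1 ≤ n (φ x) := fun x hx =>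
    Finset.card_pos.2 ⟨x, Finset.mem_filter.2 ⟨hx, rfl⟩⟩
  have hPN : P + N = ∑ b ∈ T, n b ^ 2 := by
    have e0 : ∑ x ∈ S, ((n (φ x) - 1) + 1) = P + N := by
      rw [Finset.sum_add_distrib, Finset.sum_const, smul_eq_mul, mul_one]
    have e1 : P + N = ∑ x ∈ S, n (φ x) := by
      rw [← e0]
      exact Finset.sum_congr rfl fun x hx => Nat.sub_add_cancel (hfib x hx)
    have e2 : ∑ x ∈ S, n (φ x) = ∑ b ∈ T, n b ^ 2 := by
      rw [← Finset.sum_fiberwise_of_maps_to hmaps (fun x => n (φ x))]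
      apply Finset.sum_congr rfl
      intro b _
      calc ∑ x ∈ S.filter (fun x => φ x = b), n (φ x)
          = ∑ x ∈ S.filter (fun x => φ x = b), n b :=
            Finset.sum_congr rfl fun x hx => by rw [(Finset.mem_filter.1 hx).2]
        _ = n b ^ 2 := by rw [Finset.sum_const, smul_eq_mul, sq]
    exact e1.trans e2
  have hNsum : N = ∑ b ∈ T, n b := Finset.card_eq_sum_card_fiberwise hmaps
  have h2 : N ^ 2 ≤ M * (P + N) := by
    rw [hPN, hNsum, hMdef]
    exact sq_sum_le_card_mul_sum_sq
  -- real arithmetic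
  have h2r : (N:ℝ)^2 ≤ (M:ℝ) * ((P:ℝ) + N) := by exact_mod_cast h2
  have hMr : (1:ℝ) ≤ M := by exact_mod_cast hM1
  have hMpos : (0:ℝ) < M := by linarith
  set X : ℝ := (xi ℓ S).toReal with hXdef
  have key : (4*c*lam*N) * M ≤ ((M:ℝ)*(lam+c)^2 + 4*c^2*P) * M := by
    nlinarith [sq_nonneg ((M:ℝ)*(lam+c) - 2*c*(N:ℝ)),
      mul_le_mul_of_nonneg_left h2r (by positivity : (0:ℝ) ≤ 4*c^2)]
  have key2 : 4*c*lam*N ≤ (M:ℝ)*(lam+c)^2 + 4*c^2*P := le_of_mul_le_mul_right key hMpos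
  have h1c : 4*c*((P:ℝ)*c) ≤ 4*c*X := by
    apply mul_le_mul_of_nonneg_left h1real (by positivity)
  rw [le_div_iff₀ (by positivity : (0:ℝ) < 4*c)]
  nlinarith [key2, h1c]


/-- Lower bound for the thermodynamic limit: for every `λ > 0` and `t > 0`,
`g_ℓ(λ) ≥ λ t - t Λ_ℓ(t^{-1/d})`, i.e. `g_ℓ ≥ H_ℓ*`. -/
theorem gl_lower_bound {d : ℕ} (hd : 0 < d) (ℓ : ℝ → ℝ≥0∞) (r₀ : ℝ)
    (hlsc : LowerSemicontinuous ℓ) (h0 : 0 < ℓ 0)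
    (hfin : ∀ r ≥ r₀, ℓ r ≠ ⊤) (hanti : AntitoneOn ℓ (Set.Ici r₀))
    (hlim : Tendsto ℓ atTop (nhds 0))
    (hint : ∫⁻ t in Set.Ioi r₀, ℓ t * ENNReal.ofReal (t ^ (d - 1)) ≠ ⊤) :
    ∀ lam > (0:ℝ), ∀ t > (0:ℝ),
      ((lam * t : ℝ) : EReal) - (t : EReal) * ((LamZ d ℓ (t ^ (-(1:ℝ)/d)) : ℝ≥0∞) : EReal)
        ≤ ((gl d ℓ lam : ℝ) : EReal) := by
  intro lam _hlam t ht
  set s : ℝ := t ^ (-(1:ℝ)/d) with hsdef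
  have hs : 0 < s := Real.rpow_pos_of_pos ht _
  by_cases hΛ : LamZ d ℓ s = ⊤
  · rw [hΛ, EReal.coe_ennreal_top, EReal.coe_mul_top_of_pos ht, EReal.sub_top]
    exact bot_le
  set Λr : ℝ := (LamZ d ℓ s).toReal with hΛrdef
  have hconv : ((lam * t : ℝ) : EReal) - (t : EReal) * ((LamZ d ℓ s : ℝ≥0∞) : EReal)
      = ((lam * t - t * Λr : ℝ) : EReal) := by
    have h1 : ((LamZ d ℓ s : ℝ≥0∞) : EReal) = ((Λr : ℝ) : EReal) := by
      conv_lhs => rw [← ENNReal.ofReal_toReal hΛ]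
      rw [EReal.coe_ennreal_ofReal, max_eq_left ENNReal.toReal_nonneg]
    rw [h1, ← EReal.coe_mul, ← EReal.coe_sub]
  rw [hconv]
  apply EReal.coe_le_coe_iff.2
  rcases le_or_gt lam Λr with hcase | hcase
  · have h2 : lam * t - t * Λr ≤ 0 := by nlinarith
    linarith [gl_nonneg d ℓ lam]
  · have hkey : ∀ k : ℕ+, lam * t - t * Λr ≤ Gam ℓ lam (Qcube d (k:ℕ)) / ((k:ℕ):ℝ)^d := by
      intro k
      obtain ⟨S, hSB, hStop, m, hm1, hcard, hxile⟩ := lattice_exists hd ℓ hs (k:ℕ) hΛ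
      have hGam : lam * S.card - (xi ℓ S).toReal ≤ Gam ℓ lam (Qcube d (k:ℕ)) :=
        le_csSup (Gam_bddAbove hd ℓ hlsc h0 lam (k:ℕ)) ⟨S, hSB, hStop, rfl⟩
      have hxreal : (xi ℓ S).toReal ≤ ((m:ℝ))^d * Λr := by
        have h3 := ENNReal.toReal_mono
          (ENNReal.mul_ne_top (ENNReal.natCast_ne_top _) hΛ) hxile
        rw [ENNReal.toReal_mul] at h3
        rw [hΛrdef]
        calc (xi ℓ S).toReal ≤ ((m ^ d : ℕ) : ℝ≥0∞).toReal * (LamZ d ℓ s).toReal := h3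
          _ = ((m:ℝ))^d * (LamZ d ℓ s).toReal := by
              congr 1
              simp
      have hsd : s ^ d = t⁻¹ := by
        have hexp : ((-(1:ℝ))/d) * d = -1 := by
          field_simp
        rw [hsdef, ← Real.rpow_natCast (t ^ (-(1:ℝ)/d)) d, ← Real.rpow_mul ht.le, hexp,
          Real.rpow_neg_one]
      have hmd : t * ((k:ℕ):ℝ)^d ≤ (m:ℝ)^d := by
        calc t * ((k:ℕ):ℝ)^d = (((k:ℕ):ℝ)/s)^d := by
              rw [div_pow, hsd]
              field_simp
          _ ≤ (m:ℝ)^d := pow_le_pow_left₀ (by positivity) hm1 d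
      have helem : t * ((k:ℕ):ℝ)^d * (lam - Λr) ≤ lam * S.card - (xi ℓ S).toReal := by
        rw [hcard]
        push_cast
        nlinarith [hxreal, hmd, sub_pos.2 hcase]
      have hkpos : (0:ℝ) < ((k:ℕ):ℝ)^d := by
        have : (0:ℝ) < ((k:ℕ):ℝ) := by exact_mod_cast k.pos
        positivity
      rw [le_div_iff₀ hkpos]
      calc (lam * t - t * Λr) * ((k:ℕ):ℝ)^d = t * ((k:ℕ):ℝ)^d * (lam - Λr) := by ring
        _ ≤ lam * S.card - (xi ℓ S).toReal := helem
        _ ≤ Gam ℓ lam (Qcube d (k:ℕ)) := hGam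
    exact le_ciInf hkey
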